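/- For λ₀, λ₁ > 0, the Hellinger-type integral ∫₀^∞ (√(Y(x)) − 1)² ν₀(dx), where Y(x) = e^{-(λ₁−λ₀)x} is the density of ν₁ with respect to ν₀ for the gamma-process Lévy measures νᵢ(dx) = 1_{x>0} e^{-λᵢ x} dx/x, equals log((λ₀+λ₁)²/(4 λ₀ λ₁)). -/

import Mathlib

/-!
Expanding the square, with `m = (λ₀ + λ₁) / 2` the integrand becomes
`x⁻¹ (e^{-λ₁x} - e^{-mx}) + x⁻¹ (e^{-λ₀x} - e^{-mx})`. Each summand is a Frullani integral
for `f(x) = e^{-x}`, with value `log (m / λ₁)` resp. `log (m / λ₀)`, and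
`(m / λ₁) (m / λ₀) = (λ₀ + λ₁)² / (4 λ₀ λ₁)`.
-/

open Real Set MeasureTheory Filter Topology

lemma abs_exp_neg_mul_sub_exp_neg_mul_le {a b x : ℝ} (hab : a ≤ b) (hx : 0 ≤ x) :
    |exp (-(a * x)) - exp (-(b * x))| ≤ (b - a) * x * exp (-(a * x)) := by
  have hsplit : exp (-(b * x)) = exp (-(a * x)) * exp (-((b - a) * x)) := by
    rw [← exp_add]; ring_nf
  have hle : exp (-((b - a) * x)) ≤ 1 := exp_le_one_iff.mpr (by nlinarith)
  have hge : 1 - (b - a) * x ≤ exp (-((b - a) * x)) := by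
    linarith [add_one_le_exp (-((b - a) * x))]
  rw [hsplit, abs_of_nonneg (by nlinarith [exp_pos (-(a * x))])]
  nlinarith [exp_pos (-(a * x))]

lemma integrableOn_Ioi_inv_mul_exp_neg_mul_sub_exp_neg_mul {a b : ℝ} (ha : 0 < a) (hb : 0 < b) :
    IntegrableOn (fun x => x⁻¹ * (exp (-(a * x)) - exp (-(b * x)))) (Ioi 0) := by
  wlog hab : a ≤ b generalizing a b
  · have := (this hb ha (le_of_not_ge hab)).neg
    refine this.congr_fun (fun x _ => ?_) measurableSet_Ioi
    simp only [Pi.neg_apply]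
    ring
  have hdom : IntegrableOn (fun x => (b - a) * exp (-(a * x))) (Ioi 0) := by
    have := (exp_neg_integrableOn_Ioi 0 ha).const_mul (b - a)
    simp only [neg_mul] at this
    exact this
  refine hdom.mono' ?_ ?_
  · exact (ContinuousOn.mul (continuousOn_inv₀.mono fun x hx => ne_of_gt hx)
      (by fun_prop)).aestronglyMeasurable measurableSet_Ioi
  · refine (ae_restrict_iff' measurableSet_Ioi).mpr (ae_of_all _ fun x (hx : 0 < x) => ?_)
    rw [norm_mul, norm_inv, Real.norm_of_nonneg hx.le, Real.norm_eq_abs, inv_mul_le_iff₀ hx]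
    linarith [abs_exp_neg_mul_sub_exp_neg_mul_le hab hx.le]

theorem integral_Ioi_inv_mul_exp_neg_mul_sub_exp_neg_mul {a b : ℝ} (ha : 0 < a) (hb : 0 < b) :
    ∫ x in Ioi 0, x⁻¹ * (exp (-(a * x)) - exp (-(b * x))) = log (b / a) := by
  have hcont : Continuous fun x : ℝ => exp (-x) := by fun_prop
  have hfrullani := Frullani.integral_Ioi_eq (L := 1) (R := 0)
    (hcont.locallyIntegrable.locallyIntegrableOn _) ha hb
    ((hcont.tendsto' 0 1 (by simp)).mono_left nhdsWithin_le_nhds)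
    tendsto_exp_neg_atTop_nhds_zero (integrableOn_Ioi_inv_mul_exp_neg_mul_sub_exp_neg_mul ha hb)
  simpa only [smul_eq_mul, sub_zero, mul_one] using hfrullani

lemma sq_sqrt_exp_sub_one_mul_exp_neg_div (l0 l1 x : ℝ) :
    (√(exp ((l0 - l1) * x)) - 1) ^ 2 * (exp (-(l0 * x)) / x) =
      x⁻¹ * (exp (-(l1 * x)) - exp (-((l0 + l1) / 2 * x))) +
        x⁻¹ * (exp (-(l0 * x)) - exp (-((l0 + l1) / 2 * x))) := by
  rw [← exp_half]
  have hsq : exp ((l0 - l1) * x / 2) ^ 2 * exp (-(l0 * x)) = exp (-(l1 * x)) := by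
    rw [← exp_nat_mul, ← exp_add]; ring_nf
  have hmid : exp ((l0 - l1) * x / 2) * exp (-(l0 * x)) = exp (-((l0 + l1) / 2 * x)) := by
    rw [← exp_add]; ring_nf
  rw [← hsq, ← hmid]
  ring

/-- Hellinger-type integral for gamma-process Lévy measures:
∫₀^∞ (√(Y(x)) − 1)² ν₀(dx) = log((λ₀+λ₁)²/(4λ₀λ₁)) where Y(x) = e^{(λ₀−λ₁)x}
and ν₀(dx) = 1_{x>0} e^{-λ₀ x} dx/x. -/
theorem gamma_levy_hellinger (l0 l1 : ℝ) (h0 : 0 < l0) (h1 : 0 < l1) :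
    (∫ x in Ioi (0 : ℝ),
        (Real.sqrt (Real.exp ((l0 - l1) * x)) - 1) ^ 2 * (Real.exp (-(l0 * x)) / x))
      = Real.log ((l0 + l1) ^ 2 / (4 * l0 * l1)) := by
  have hm : 0 < (l0 + l1) / 2 := by positivity
  simp_rw [sq_sqrt_exp_sub_one_mul_exp_neg_div]
  rw [integral_add (integrableOn_Ioi_inv_mul_exp_neg_mul_sub_exp_neg_mul h1 hm)
      (integrableOn_Ioi_inv_mul_exp_neg_mul_sub_exp_neg_mul h0 hm),
    integral_Ioi_inv_mul_exp_neg_mul_sub_exp_neg_mul h1 hm,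
    integral_Ioi_inv_mul_exp_neg_mul_sub_exp_neg_mul h0 hm,
    ← log_mul (by positivity) (by positivity)]
  congr 1
  field_simp
  ring
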